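/- arXiv:math/0211261 — 3 statements merged into one kernel-verified Lean document; each statement's English description precedes it below -/
import Mathlib

section
/- For a non-degenerate simplex in Euclidean n-space with faces f_1, ..., f_{n+1}, where A_i is the (n-1)-dimensional area of face f_i and 𝐟_i its outward unit normal, the sum ∑_{i=1}^{n+1} A_i 𝐟_i = 0 (the Minkowski relation). -/
/-!
Let `g i` be the gradient of the `i`-th barycentric coordinate. The outward unit normal of the
face opposite vertex `i` is `-‖g i‖⁻¹ • g i`, and `∑ i, g i = 0` because the barycentric
coordinates sum to `1`; so it suffices that `A i / ‖g i‖` does not depend on `i`.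

The affine map exchanging the vertices `i` and `j` maps the simplex onto itself, so its linear part
`L` has `|det L| = 1`; it maps face `i` onto face `j` and pulls the `j`-th barycentric coordinate
back to the `i`-th. If a linear map `L` sends a hyperplane `W₁` with unit normal `u₁` into a
hyperplane `W₂` with unit normal `u₂`, then `|det L|` is the area factor of `L` on `W₁` times
`|⟪u₂, L u₁⟫|`, which here is `‖g i‖ / ‖g j‖`. Hence `A j * ‖g i‖ = A i * ‖g j‖`.
-/

open MeasureTheory RealInnerProductSpace

/-- The `(n-1)`-dimensional area of the `i`-th face of the simplex with vertices `v`
(the convex hull of all vertices except the `i`-th). -/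
noncomputable def faceArea {n : ℕ} (v : Fin (n + 1) → EuclideanSpace ℝ (Fin n))
    (i : Fin (n + 1)) : ℝ :=
  (μH[((n : ℝ) - 1)] (convexHull ℝ (v '' {i}ᶜ))).toReal

/-- `u` is the outward unit normal to the `i`-th face of the simplex with vertices `v`:
it is a unit vector, orthogonal to the affine hull of the face, pointing away from the
omitted vertex `v i`. -/
def IsOutwardNormal {n : ℕ} (v : Fin (n + 1) → EuclideanSpace ℝ (Fin n))
    (i : Fin (n + 1)) (u : EuclideanSpace ℝ (Fin n)) : Prop :=
  ‖u‖ = 1 ∧ (∀ j k, j ≠ i → k ≠ i → ⟪u, v j - v k⟫ = 0) ∧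
    (∀ j, j ≠ i → ⟪u, v i - v j⟫ < 0)

open Module Set

section HyperplaneMeasure

variable {E : Type*} [NormedAddCommGroup E] [InnerProductSpace ℝ E]

theorem exists_orthonormalBasis_sumElim {ι : Type*} [Fintype ι] {W : Submodule ℝ E}
    (c : OrthonormalBasis ι ℝ W) (hW : finrank ℝ W + 1 = finrank ℝ E) {u : E} (hu : u ∈ Wᗮ)
    (hu₁ : ‖u‖ = 1) :
    ∃ β : OrthonormalBasis (ι ⊕ Unit) ℝ E, ⇑β = Sum.elim (fun k ↦ (c k : E)) fun _ ↦ u := by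
  have hon : Orthonormal ℝ (Sum.elim (fun k ↦ (c k : E)) fun _ : Unit ↦ u) := by
    refine ⟨?_, ?_⟩
    · rintro (k | _)
      · exact c.orthonormal.1 k
      · exact hu₁
    · rintro (k | _) (l | _) hkl
      · simpa [← Submodule.coe_inner] using c.orthonormal.2 fun h ↦ hkl (congrArg _ h)
      · exact Submodule.inner_right_of_mem_orthogonal (c k).2 hu
      · exact Submodule.inner_left_of_mem_orthogonal (c l).2 hu
      · exact absurd rfl hkl
  have hcard : Fintype.card (ι ⊕ Unit) = finrank ℝ E := by
    simp [← hW, finrank_eq_card_basis c.toBasis]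
  exact ⟨(basisOfOrthonormalOfCardEqFinrank hon hcard).toOrthonormalBasis (by simpa), by simp⟩

variable [FiniteDimensional ℝ E] {W₁ W₂ : Submodule ℝ E}

theorem abs_det_eq_normDet_comp_subtype_mul_abs_inner
    (h₁ : finrank ℝ W₁ + 1 = finrank ℝ E) (h₂ : finrank ℝ W₂ + 1 = finrank ℝ E)
    {L : E →ₗ[ℝ] E} (hL : ∀ x ∈ W₁, L x ∈ W₂) {u₁ u₂ : E} (hu₁ : u₁ ∈ W₁ᗮ) (hu₂ : u₂ ∈ W₂ᗮ)
    (hn₁ : ‖u₁‖ = 1) (hn₂ : ‖u₂‖ = 1) :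
    |L.det| = (L ∘ₗ W₁.subtype).normDet * |⟪u₂, L u₁⟫| := by
  let c₁ := stdOrthonormalBasis ℝ W₁
  let c₂ := (stdOrthonormalBasis ℝ W₂).reindex (finCongr (by omega : finrank ℝ W₂ = finrank ℝ W₁))
  obtain ⟨β₁, hβ₁⟩ := exists_orthonormalBasis_sumElim c₁ h₁ hu₁ hn₁
  obtain ⟨β₂, hβ₂⟩ := exists_orthonormalBasis_sumElim c₂ h₂ hu₂ hn₂
  have hL' : ∀ x, (L ∘ₗ W₁.subtype) x ∈ W₂ := fun x ↦ hL x x.2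
  have hblock : L.toMatrix β₁.toBasis β₂.toBasis = Matrix.fromBlocks
      (((L ∘ₗ W₁.subtype).codRestrict W₂ hL').toMatrix c₁.toBasis c₂.toBasis)
      (Matrix.of fun k _ ↦ ⟪(c₂ k : E), L u₁⟫) 0 (Matrix.of fun _ _ ↦ ⟪u₂, L u₁⟫) := by
    ext (r | r) (k | k) <;>
      simp [LinearMap.toMatrix_apply, OrthonormalBasis.repr_apply_apply, hβ₁, hβ₂]
    exact Submodule.inner_left_of_mem_orthogonal (hL _ (c₁ k).2) hu₂
  rw [← LinearMap.normDet_eq_abs_det, L.normDet_eq_norm_det_toMatrix β₁ β₂, hblock,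
    Matrix.det_fromBlocks_zero₂₁, ← LinearMap.normDet_codRestrict hL',
    LinearMap.normDet_eq_norm_det_toMatrix _ c₁ c₂]
  simp [Matrix.det_unique]

theorem hausdorffMeasure_image_mul_ofReal_abs_inner [MeasurableSpace E] [BorelSpace E]
    (h₁ : finrank ℝ W₁ + 1 = finrank ℝ E) (h₂ : finrank ℝ W₂ + 1 = finrank ℝ E)
    {L : E →ₗ[ℝ] E} (hL : ∀ x ∈ W₁, L x ∈ W₂) {u₁ u₂ : E} (hu₁ : u₁ ∈ W₁ᗮ) (hu₂ : u₂ ∈ W₂ᗮ)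
    (hn₁ : ‖u₁‖ = 1) (hn₂ : ‖u₂‖ = 1) {s : Set E} (hs : s ⊆ W₁) :
    μH[finrank ℝ W₁] (L '' s) * ENNReal.ofReal |⟪u₂, L u₁⟫| =
      ENNReal.ofReal |L.det| * μH[finrank ℝ W₁] s := by
  obtain ⟨t, rfl⟩ : ∃ t : Set W₁, W₁.subtype '' t = s :=
    ⟨W₁.subtype ⁻¹' s, image_preimage_eq_of_subset (by simpa using hs)⟩
  have hsub : Isometry W₁.subtype := W₁.subtypeₗᵢ.isometry
  rw [image_image, hsub.hausdorffMeasure_image (Or.inl (Nat.cast_nonneg _))]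
  change μH[_] ((L ∘ₗ W₁.subtype) '' t) * _ = _
  rw [LinearMap.hausdorffMeasure_image,
    abs_det_eq_normDet_comp_subtype_mul_abs_inner h₁ h₂ hL hu₁ hu₂ hn₁ hn₂,
    ENNReal.ofReal_mul (LinearMap.normDet_nonneg _)]
  ring

end HyperplaneMeasure

theorem AffineMap.abs_det_linear_eq_one_of_image_eq {E : Type*} [NormedAddCommGroup E]
    [NormedSpace ℝ E] [FiniteDimensional ℝ E] (T : E →ᵃ[ℝ] E) {S : Set E} (hS : IsCompact S)
    (hS' : (interior S).Nonempty) (hTS : T '' S = S) : |T.linear.det| = 1 := by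
  borelize E
  let μ : Measure E := Measure.addHaar
  have hT : ⇑T = (· + T 0) ∘ T.linear := funext fun x ↦ by simpa using congrFun T.decomp x
  have himage : μ (T '' S) = ENNReal.ofReal |T.linear.det| * μ S := by
    rw [hT, image_comp, image_add_right, measure_preimage_add_right,
      Measure.addHaar_image_linearMap]
  rw [hTS, eq_comm, ENNReal.mul_eq_right (Measure.measure_pos_of_nonempty_interior μ hS').ne'
    hS.measure_lt_top.ne, ENNReal.ofReal_eq_one] at himage
  exact himage

theorem mem_orthogonal_vectorSpan_iff {E : Type*} [NormedAddCommGroup E] [InnerProductSpace ℝ E]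
    {s : Set E} {u : E} : u ∈ (vectorSpan ℝ s)ᗮ ↔ ∀ x ∈ s, ∀ y ∈ s, ⟪u, x - y⟫ = 0 := by
  refine ⟨fun hu x hx y hy ↦
    Submodule.inner_left_of_mem_orthogonal (vsub_mem_vectorSpan ℝ hx hy) hu,
    fun h ↦ (Submodule.mem_orthogonal' _ _).2 fun v hv ↦ ?_⟩
  rw [vectorSpan_def] at hv
  induction hv using Submodule.span_induction with
  | mem v hv =>
    obtain ⟨x, hx, y, hy, rfl⟩ := hv
    exact h x hx y hy
  | zero => exact inner_zero_right u
  | add v w _ _ hv hw => rw [inner_add_right, hv, hw, add_zero]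
  | smul c v _ hv => rw [inner_smul_right, hv, mul_zero]

namespace AffineBasis

section Perm

variable {ι k V P : Type*} [Fintype ι] [Ring k] [AddCommGroup V] [Module k V] [AddTorsor V P]
  (b : AffineBasis ι k P) (σ : Equiv.Perm ι)

noncomputable def permMap : P →ᵃ[k] P :=
  (Finset.univ.affineCombination k (b ∘ σ)).comp b.coords

theorem permMap_apply (m : ι) : b.permMap σ (b m) = b (σ m) := by
  classical
  refine Finset.univ.affineCombination_of_eq_one_of_eq_zero _ _ (Finset.mem_univ m) ?_ ?_
  · simp [coords_apply]
  · intro l _ hl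
    simp [coords_apply, b.coord_apply_ne hl]

theorem permMap_image_image (s : Set ι) : b.permMap σ '' (b '' s) = b '' (σ '' s) := by
  simp_rw [image_image, permMap_apply]

theorem coord_comp_permMap (m : ι) : (b.coord (σ m)).comp (b.permMap σ) = b.coord m := by
  classical
  refine AffineMap.ext_on b.tot ?_
  rintro - ⟨l, rfl⟩
  simp [permMap_apply, coord_apply]

end Perm

theorem finrank_vectorSpan_image_compl_add_one {ι k V P : Type*} [Fintype ι] [Nontrivial ι]
    [DivisionRing k] [AddCommGroup V] [Module k V] [AddTorsor V P] (b : AffineBasis ι k P)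
    (i : ι) : finrank k (vectorSpan k (b '' {i}ᶜ)) + 1 = finrank k V := by
  classical
  have hcard := b.card_eq_finrank_add_one
  have htwo := Fintype.one_lt_card (α := ι)
  have hface : (((Finset.univ.erase i).image b : Finset P) : Set P) = b '' {i}ᶜ := by
    ext; simp
  rw [← hface, b.ind.finrank_vectorSpan_image_finset (n := finrank k V - 1)]
  · omega
  · rw [Finset.card_erase_of_mem (Finset.mem_univ i), Finset.card_univ]
    omega

section Face

variable {ι E : Type*} [AddCommGroup E] [Module ℝ E] (b : AffineBasis ι ℝ E)

theorem sub_image_face_subset_vectorSpan {i j : ι} (hji : j ≠ i) :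
    (· - b j) '' convexHull ℝ (b '' {i}ᶜ) ⊆ vectorSpan ℝ (b '' {i}ᶜ) := by
  rintro - ⟨x, hx, rfl⟩
  rw [← direction_affineSpan]
  exact AffineSubspace.vsub_mem_direction (convexHull_subset_affineSpan _ hx)
    (subset_affineSpan ℝ _ (mem_image_of_mem b hji))

theorem image_permMap_face [Fintype ι] (σ : Equiv.Perm ι) (m : ι) :
    b.permMap σ '' convexHull ℝ (b '' {m}ᶜ) = convexHull ℝ (b '' {σ m}ᶜ) := by
  rw [AffineMap.image_convexHull, permMap_image_image, image_compl_eq σ.bijective,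
    image_singleton]

theorem permMap_linear_mem_vectorSpan [Fintype ι] (σ : Equiv.Perm ι) (m : ι) {x : E}
    (hx : x ∈ vectorSpan ℝ (b '' {m}ᶜ)) :
    (b.permMap σ).linear x ∈ vectorSpan ℝ (b '' {σ m}ᶜ) := by
  rw [← image_singleton, ← image_compl_eq σ.bijective, ← permMap_image_image,
    ← AffineMap.map_vectorSpan]
  exact Submodule.mem_map_of_mem hx

theorem permMap_linear_image_sub_image_face [Fintype ι] (σ : Equiv.Perm ι) (m l : ι) :
    (b.permMap σ).linear '' ((· - b l) '' convexHull ℝ (b '' {m}ᶜ)) =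
      (· - b (σ l)) '' convexHull ℝ (b '' {σ m}ᶜ) := by
  rw [← image_permMap_face, image_image, image_image]
  refine image_congr fun x _ ↦ ?_
  simpa [permMap_apply] using (b.permMap σ).linearMap_vsub x (b l)

end Face

section CoordGradient

variable {ι E : Type*} [NormedAddCommGroup E] [InnerProductSpace ℝ E] [FiniteDimensional ℝ E]
  (b : AffineBasis ι ℝ E)

noncomputable def coordGradient (i : ι) : E :=
  (InnerProductSpace.toDual ℝ E).symm (b.coord i).linear.toContinuousLinearMap

theorem inner_coordGradient_sub (i : ι) (x y : E) :
    ⟪b.coordGradient i, x - y⟫ = b.coord i x - b.coord i y := by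
  rw [coordGradient, InnerProductSpace.toDual_symm_apply]
  exact (b.coord i).linearMap_vsub x y

theorem inner_coordGradient_sub_of_ne {i j : ι} (hji : j ≠ i) :
    ⟪b.coordGradient i, b i - b j⟫ = 1 := by
  rw [inner_coordGradient_sub, coord_apply_eq, coord_apply_ne _ hji.symm, sub_zero]

theorem coordGradient_ne_zero [Nontrivial ι] (i : ι) : b.coordGradient i ≠ 0 := by
  obtain ⟨j, hji⟩ := exists_ne i
  intro h
  simpa [h] using b.inner_coordGradient_sub_of_ne hji

theorem sum_coordGradient [Fintype ι] : ∑ i, b.coordGradient i = 0 := by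
  have h : ∀ x, ⟪∑ i, b.coordGradient i, x - 0⟫ = 0 := fun x ↦ by
    rw [sum_inner, Finset.sum_congr rfl fun i _ ↦ b.inner_coordGradient_sub i x 0,
      Finset.sum_sub_distrib, sum_coord_apply_eq_one, sum_coord_apply_eq_one, sub_self]
  simpa using h (∑ i, b.coordGradient i)

theorem coordGradient_mem_orthogonal (i : ι) :
    b.coordGradient i ∈ (vectorSpan ℝ (b '' {i}ᶜ))ᗮ := by
  rw [mem_orthogonal_vectorSpan_iff]
  rintro - ⟨j, hj, rfl⟩ - ⟨k, hk, rfl⟩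
  rw [inner_coordGradient_sub, coord_apply_ne _ (Ne.symm hj), coord_apply_ne _ (Ne.symm hk),
    sub_self]

theorem orthogonal_vectorSpan_image_compl [Fintype ι] [Nontrivial ι] (i : ι) :
    (vectorSpan ℝ (b '' {i}ᶜ))ᗮ = ℝ ∙ b.coordGradient i := by
  refine (Submodule.eq_of_le_of_finrank_le
    ((Submodule.span_singleton_le_iff_mem _ _).2 (b.coordGradient_mem_orthogonal i)) ?_).symm
  have h := (vectorSpan ℝ (b '' {i}ᶜ)).finrank_add_finrank_orthogonal
  have h' := b.finrank_vectorSpan_image_compl_add_one i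
  rw [finrank_span_singleton (b.coordGradient_ne_zero i)]
  omega

theorem eq_neg_inv_norm_smul_coordGradient [Fintype ι] [Nontrivial ι] {i j : ι} {u : E}
    (hu : u ∈ (vectorSpan ℝ (b '' {i}ᶜ))ᗮ) (hu₁ : ‖u‖ = 1) (hji : j ≠ i)
    (hneg : ⟪u, b i - b j⟫ < 0) : u = -(‖b.coordGradient i‖⁻¹ • b.coordGradient i) := by
  rw [b.orthogonal_vectorSpan_image_compl i, Submodule.mem_span_singleton] at hu
  obtain ⟨c, rfl⟩ := hu
  rw [real_inner_smul_left, b.inner_coordGradient_sub_of_ne hji, mul_one] at hneg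
  rw [norm_smul, Real.norm_eq_abs, abs_of_neg hneg] at hu₁
  rw [← neg_smul, inv_eq_of_mul_eq_one_left hu₁, neg_neg]

theorem inner_coordGradient_permMap_linear [Fintype ι] (σ : Equiv.Perm ι) (m : ι) (x : E) :
    ⟪b.coordGradient (σ m), (b.permMap σ).linear x⟫ = ⟪b.coordGradient m, x⟫ := by
  have hL : (b.permMap σ).linear x = b.permMap σ x - b.permMap σ 0 := by
    simpa using (b.permMap σ).linearMap_vsub x 0
  rw [hL, inner_coordGradient_sub, ← AffineMap.comp_apply, ← AffineMap.comp_apply,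
    coord_comp_permMap, ← inner_coordGradient_sub, sub_zero]

theorem abs_det_permMap_linear [Fintype ι] (σ : Equiv.Perm ι) :
    |(b.permMap σ).linear.det| = 1 := by
  refine (b.permMap σ).abs_det_linear_eq_one_of_image_eq
    ((toFinite _).isCompact_convexHull (𝕜 := ℝ)) ⟨_, b.centroid_mem_interior_convexHull⟩ ?_
  rw [AffineMap.image_convexHull, ← image_univ, permMap_image_image,
    image_univ_of_surjective σ.surjective]

theorem norm_inv_norm_smul_coordGradient [Nontrivial ι] (i : ι) :
    ‖‖b.coordGradient i‖⁻¹ • b.coordGradient i‖ = 1 := by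
  rw [norm_smul, norm_inv, norm_norm,
    inv_mul_cancel₀ (norm_ne_zero_iff.2 (b.coordGradient_ne_zero i))]

theorem inner_inv_norm_smul_coordGradient_permMap_linear [Fintype ι] [Nontrivial ι]
    (σ : Equiv.Perm ι) (m : ι) :
    ⟪‖b.coordGradient (σ m)‖⁻¹ • b.coordGradient (σ m),
      (b.permMap σ).linear (‖b.coordGradient m‖⁻¹ • b.coordGradient m)⟫ =
      ‖b.coordGradient m‖ / ‖b.coordGradient (σ m)‖ := by
  rw [map_smul, real_inner_smul_left, real_inner_smul_right,
    b.inner_coordGradient_permMap_linear, real_inner_self_eq_norm_sq]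
  have := norm_ne_zero_iff.2 (b.coordGradient_ne_zero m)
  field_simp

theorem hausdorffMeasure_face_mul_ofReal_norm_div [Fintype ι] [Nontrivial ι] [MeasurableSpace E]
    [BorelSpace E] (σ : Equiv.Perm ι) (m : ι) :
    μH[(finrank ℝ E - 1 : ℕ)] (convexHull ℝ (b '' {σ m}ᶜ)) *
        ENNReal.ofReal (‖b.coordGradient m‖ / ‖b.coordGradient (σ m)‖) =
      μH[(finrank ℝ E - 1 : ℕ)] (convexHull ℝ (b '' {m}ᶜ)) := by
  obtain ⟨l, hlm⟩ := exists_ne m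
  have hdim : finrank ℝ (vectorSpan ℝ (b '' {m}ᶜ)) = finrank ℝ E - 1 := by
    have := b.finrank_vectorSpan_image_compl_add_one m
    omega
  have htrans : ∀ (c : E) (s : Set E),
      μH[(finrank ℝ E - 1 : ℕ)] ((· - c) '' s) = μH[(finrank ℝ E - 1 : ℕ)] s := fun c s ↦ by
    simpa using (IsometryEquiv.subRight c).hausdorffMeasure_image _ s
  have hscale := hausdorffMeasure_image_mul_ofReal_abs_inner
    (b.finrank_vectorSpan_image_compl_add_one m) (b.finrank_vectorSpan_image_compl_add_one (σ m))
    (fun _ ↦ b.permMap_linear_mem_vectorSpan σ m)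
    (Submodule.smul_mem _ _ (b.coordGradient_mem_orthogonal m))
    (Submodule.smul_mem _ _ (b.coordGradient_mem_orthogonal (σ m)))
    (b.norm_inv_norm_smul_coordGradient m) (b.norm_inv_norm_smul_coordGradient (σ m))
    (b.sub_image_face_subset_vectorSpan hlm)
  rwa [permMap_linear_image_sub_image_face, hdim, htrans, htrans,
    inner_inv_norm_smul_coordGradient_permMap_linear, b.abs_det_permMap_linear,
    ENNReal.ofReal_one, one_mul, abs_of_nonneg (by positivity)] at hscale

theorem sum_toReal_hausdorffMeasure_face_smul_unit_coordGradient [Fintype ι] [Nontrivial ι]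
    [MeasurableSpace E] [BorelSpace E] :
    ∑ i, (μH[(finrank ℝ E - 1 : ℕ)] (convexHull ℝ (b '' {i}ᶜ))).toReal •
      (‖b.coordGradient i‖⁻¹ • b.coordGradient i) = 0 := by
  classical
  obtain ⟨i₀⟩ := b.nonempty
  have hterm : ∀ i, (μH[(finrank ℝ E - 1 : ℕ)] (convexHull ℝ (b '' {i}ᶜ))).toReal •
      (‖b.coordGradient i‖⁻¹ • b.coordGradient i) =
      ((μH[(finrank ℝ E - 1 : ℕ)] (convexHull ℝ (b '' {i₀}ᶜ))).toReal *
        ‖b.coordGradient i₀‖⁻¹) • b.coordGradient i := fun i ↦ by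
    have h := congrArg ENNReal.toReal
      (b.hausdorffMeasure_face_mul_ofReal_norm_div (Equiv.swap i₀ i) i₀)
    rw [Equiv.swap_apply_left, ENNReal.toReal_mul, ENNReal.toReal_ofReal (by positivity)] at h
    have hi := norm_ne_zero_iff.2 (b.coordGradient_ne_zero i)
    have hi₀ := norm_ne_zero_iff.2 (b.coordGradient_ne_zero i₀)
    rw [smul_smul, ← h]
    congr 1
    field_simp
  rw [Finset.sum_congr rfl fun i _ ↦ hterm i, ← Finset.smul_sum, sum_coordGradient, smul_zero]

end CoordGradient

end AffineBasis

/-- The Minkowski relation: the area-weighted sum of the outward unit normals of a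
non-degenerate simplex vanishes. -/
theorem minkowski_relation {n : ℕ} (v : Fin (n + 1) → EuclideanSpace ℝ (Fin n))
    (hv : AffineIndependent ℝ v)
    (f : Fin (n + 1) → EuclideanSpace ℝ (Fin n))
    (hf : ∀ i, IsOutwardNormal v i (f i)) :
    ∑ i, faceArea v i • f i = 0 := by
  cases n with
  | zero => exact Subsingleton.elim _ _
  | succ m =>
    let b : AffineBasis (Fin (m + 2)) ℝ (EuclideanSpace ℝ (Fin (m + 1))) :=
      ⟨v, hv, hv.affineSpan_eq_top_iff_card_eq_finrank_add_one.2 (by simp)⟩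
    have hnormal : ∀ i, f i = -(‖b.coordGradient i‖⁻¹ • b.coordGradient i) := fun i ↦ by
      obtain ⟨j, hji⟩ := exists_ne i
      refine b.eq_neg_inv_norm_smul_coordGradient ?_ (hf i).1 hji ((hf i).2.2 j hji)
      rw [mem_orthogonal_vectorSpan_iff]
      rintro - ⟨k, hk, rfl⟩ - ⟨l, hl, rfl⟩
      exact (hf i).2.1 k l hk hl
    have harea : ∀ i, faceArea v i = (μH[(finrank ℝ (EuclideanSpace ℝ (Fin (m + 1))) - 1 : ℕ)]
        (convexHull ℝ (b '' {i}ᶜ))).toReal := fun i ↦ by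
      simp [faceArea, show ⇑b = v from rfl]
    simp only [harea, hnormal, smul_neg, Finset.sum_neg_distrib,
      b.sum_toReal_hausdorffMeasure_face_smul_unit_coordGradient, neg_zero]
end

section
/- For a non-degenerate simplex Δ in ℝ^n with face areas A_i and Gram matrix G of outward unit normals, the adjugate of G equals c·aaᵀ where a = (A_1,...,A_{n+1}) and c > 0; in particular A_i²/A_j² = adj(G)_{ii}/adj(G)_{jj} for all i, j. -/
/-!
Any linear relation `∑ c i • f i = 0` with some `c t = 0` is trivial: pairing it with `v s - v t`
kills every term but `c s * ⟪f s, v s - v t⟫`, and that inner product is negative. Minkowski's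
relation `∑ A i • f i = 0` holds because the area `A i` is proportional to `|det (f i, edges of
facet i)|`, and this determinant times the height `⟪f i, v i - v j⟫` is, up to sign, the determinant
of the vertex matrix, whatever `i` is. So the kernel of `G` is the line through `A`; since `G` is
symmetric and `G * adj G = det G • 1 = 0`, this forces `adj G = c • A Aᵀ`, and `c > 0` because
`adj G 0 0` is the Gram determinant of the independent normals `f 1, …, f n`.
-/

open MeasureTheory RealInnerProductSpace Matrix

open Set

section

variable {𝕜 V : Type*} [Ring 𝕜] [AddCommGroup V] [Module 𝕜 V] {k : ℕ}

def edgeVectors (w : Fin (k + 1) → V) (j : Fin k) : V :=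
  w j.succ - w 0

theorem AffineIndependent.linearIndependent_edgeVectors {w : Fin (k + 1) → V}
    (hw : AffineIndependent 𝕜 w) :
    LinearIndependent 𝕜 (edgeVectors w) := by
  rw [affineIndependent_iff_linearIndependent_vsub 𝕜 w 0] at hw
  exact hw.comp (fun j => ⟨j.succ, Fin.succ_ne_zero j⟩) fun a b h => by simpa using h

end

section

variable {E : Type*} [NormedAddCommGroup E] [InnerProductSpace ℝ E]

namespace Matrix

section

variable {ι K : Type*} [Fintype ι] [DecidableEq ι] [Field K]

theorem IsSymm.adjugate_eq_smul_vecMulVec {G : Matrix ι ι K} (hG : G.IsSymm) (hdet : G.det = 0)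
    {a : ι → K} {p : ι} (hp : a p ≠ 0) (hker : ∀ x, G *ᵥ x = 0 → ∃ t : K, x = t • a) :
    G.adjugate = (G.adjugate p p / a p ^ 2) • vecMulVec a a := by
  have hcol : ∀ j, ∃ t : K, (fun k => G.adjugate k j) = t • a := fun j => hker _ <| by
    ext i
    simpa [mulVec, dotProduct, mul_apply, hdet] using congr_fun₂ (G.mul_adjugate) i j
  choose t ht using hcol
  have hadj (k j) : G.adjugate k j = t j * a k := by simpa using congr_fun (ht j) k
  ext k j
  have hsymm : G.adjugate p j = G.adjugate j p := by
    simpa [hG.eq] using congr_fun₂ G.adjugate_transpose j p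
  rw [hadj p j, hadj j p] at hsymm
  rw [hadj, hadj p p, smul_apply, vecMulVec_apply, smul_eq_mul]
  field_simp
  linear_combination a k * hsymm

end

section

variable {R : Type*} [CommRing R] {k : ℕ}

theorem det_updateRow_eq_neg_one_pow_mul_det_vecCons (A : Matrix (Fin (k + 1)) (Fin (k + 1)) R)
    (i : Fin (k + 1)) (r : Fin (k + 1) → R) :
    (A.updateRow i r).det = (-1) ^ (i : ℕ) * (of (vecCons r fun j => A (i.succAbove j))).det := by
  rw [det_succ_row _ i, det_succ_row_zero, Finset.mul_sum]
  refine Finset.sum_congr rfl fun j _ => ?_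
  have hsub : (of (vecCons r fun j => A (i.succAbove j))).submatrix Fin.succ j.succAbove =
      A.submatrix i.succAbove j.succAbove := rfl
  simp only [pow_add, updateRow_self, submatrix_updateRow_succAbove, of_apply, cons_val_zero, hsub]
  ring

theorem det_vecCons_zero_vecCons_one (x : Fin (k + 1) → R) (w : Fin (k + 1) → Fin (k + 1) → R) :
    (of (vecCons (vecCons 0 x) fun j => vecCons 1 (w j))).det =
      -(of (vecCons x fun j : Fin k => w j.succ - w 0)).det := by
  set B := of (vecCons (vecCons 0 x) (vecCons (vecCons 1 (w 0))
    fun j : Fin k => vecCons 0 (w j.succ - w 0)))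
  have hreduce : (of (vecCons (vecCons 0 x) fun j => vecCons 1 (w j))).det = B.det := by
    refine det_eq_of_forall_row_eq_smul_add_const (vecCons 0 (vecCons 0 fun _ => 1)) 1 rfl ?_
    intro i j
    induction i using Fin.cases with
    | zero => simp [B]
    | succ i => induction i using Fin.cases <;> induction j using Fin.cases <;> simp [B]
  have hminor :
      B.submatrix (Fin.succAbove 1) Fin.succ = of (vecCons x fun j => w j.succ - w 0) := by
    ext a b
    induction a using Fin.cases <;> simp [B, Fin.succAbove]
  rw [hreduce, det_succ_column_zero, Fin.sum_univ_succ, Fin.sum_univ_succ]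
  simp [B, hminor]

end

theorem gram_mulVec_eq_zero_iff {ι : Type*} [Fintype ι] (f : ι → E) (x : ι → ℝ) :
    gram ℝ f *ᵥ x = 0 ↔ ∑ i, x i • f i = 0 := by
  refine ⟨fun h => ?_, fun h => ?_⟩
  · rw [← inner_self_eq_zero (𝕜 := ℝ), ← star_dotProduct_gram_mulVec, h, dotProduct_zero]
  · ext i
    calc (gram ℝ f *ᵥ x) i = ⟪f i, ∑ j, x j • f j⟫ := by
          simp [mulVec, dotProduct, gram_apply, inner_sum, inner_smul_right, mul_comm]
      _ = 0 := by rw [h, inner_zero_right]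

theorem exists_pos_adjugate_gram_eq_smul_vecMulVec {k : ℕ} (f : Fin (k + 1) → E)
    {a : Fin (k + 1) → ℝ} (ha : ∑ i, a i • f i = 0) (ha₀ : a 0 ≠ 0)
    (hrel : ∀ c : Fin (k + 1) → ℝ, ∑ i, c i • f i = 0 → c 0 = 0 → c = 0) :
    ∃ c : ℝ, 0 < c ∧ (gram ℝ f).adjugate = c • vecMulVec a a := by
  have hdet : (gram ℝ f).det = 0 :=
    exists_mulVec_eq_zero_iff.mp
      ⟨a, fun h => ha₀ (congr_fun h 0), (gram_mulVec_eq_zero_iff f a).2 ha⟩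
  have hker : ∀ x, gram ℝ f *ᵥ x = 0 → ∃ t : ℝ, x = t • a := fun x hx => by
    refine ⟨x 0 / a 0, sub_eq_zero.mp (hrel _ ?_ (by simp [ha₀]))⟩
    rw [gram_mulVec_eq_zero_iff] at hx
    simp [sub_smul, Finset.sum_sub_distrib, hx, mul_smul, ← Finset.smul_sum, ha]
  have hindep : LinearIndependent ℝ (f ∘ Fin.succ) := by
    refine Fintype.linearIndependent_iff.2 fun g hg j => ?_
    simpa using congr_fun (hrel (Fin.cons 0 g) (by simpa [Fin.sum_univ_succ] using hg) rfl) j.succ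
  have hminor : 0 < (gram ℝ f).adjugate 0 0 := by
    rw [adjugate_fin_succ_eq_det_submatrix, Fin.succAbove_zero, Fin.val_zero, pow_zero, one_mul]
    exact (posDef_gram_of_linearIndependent hindep).det_pos
  have hsymm : (gram ℝ f).IsSymm := Matrix.ext fun i j => real_inner_comm _ _
  refine ⟨_, ?_, hsymm.adjugate_eq_smul_vecMulVec hdet ha₀ hker⟩
  exact div_pos hminor (sq_pos_iff.2 ha₀)

theorem det_gram_cons {k : ℕ} {u : E} {e : Fin k → E} (he : ∀ j, ⟪u, e j⟫ = 0) :
    (gram ℝ (Fin.cons u e : Fin (k + 1) → E)).det = ‖u‖ ^ 2 * (gram ℝ e).det := by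
  have hsub : (gram ℝ (Fin.cons u e : Fin (k + 1) → E)).submatrix Fin.succ Fin.succ = gram ℝ e :=
    rfl
  rw [det_succ_row_zero, Fin.sum_univ_succ]
  simp [gram_apply, he, hsub]

end Matrix

theorem OrthonormalBasis.toBasis_det_sq {ι : Type*} [Fintype ι] [DecidableEq ι]
    (b : OrthonormalBasis ι ℝ E) (v : ι → E) : b.toBasis.det v ^ 2 = (gram ℝ v).det := by
  rw [gram_eq_conjTranspose_mul b, det_mul, det_conjTranspose, Module.Basis.det_apply, sq,
    star_trivial]
  rfl

theorem EuclideanSpace.basisFun_toBasis_det {k : ℕ} (c : Fin k → EuclideanSpace ℝ (Fin k)) :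
    (EuclideanSpace.basisFun (Fin k) ℝ).toBasis.det c = (of fun j => (c j).ofLp).det := by
  rw [Module.Basis.det_apply, ← det_transpose]
  rfl

theorem EuclideanSpace.abs_det_basisFun_constr {k : ℕ} (u : Fin k → EuclideanSpace ℝ (Fin k)) :
    |LinearMap.det ((EuclideanSpace.basisFun (Fin k) ℝ).toBasis.constr ℝ u)| = √(gram ℝ u).det := by
  set b := (EuclideanSpace.basisFun (Fin k) ℝ).toBasis
  have hM : LinearMap.toMatrix b b (b.constr ℝ u) = b.toMatrix u := by
    ext i j
    simp [LinearMap.toMatrix_apply, Module.Basis.toMatrix_apply]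
  rw [← OrthonormalBasis.toBasis_det_sq, Real.sqrt_sq_eq_abs, ← LinearMap.det_toMatrix b, hM,
    Module.Basis.det_apply]

theorem AlternatingMap.apply_cons_eq_inner_mul {k : ℕ} (ω : E [⋀^Fin (k + 1)]→ₗ[ℝ] ℝ)
    {u : E} (hu : ‖u‖ = 1) {e : Fin k → E} (he : (ℝ ∙ u)ᗮ ≤ Submodule.span ℝ (Set.range e))
    (x : E) : ω (Fin.cons x e) = ⟪u, x⟫ * ω (Fin.cons u e) := by
  set y := x - ⟪u, x⟫ • u
  have hy : y ∈ Submodule.span ℝ (Set.range e) := he <| by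
    rw [Submodule.mem_orthogonal_singleton_iff_inner_right]
    simp [y, inner_sub_right, inner_smul_right, hu]
  have hy0 : ω (Fin.cons y e) = 0 :=
    ω.map_linearDependent _ fun h => (linearIndependent_finCons.1 h).2 hy
  calc ω (Fin.cons x e) = ω.toMultilinearMap (Fin.cons (⟪u, x⟫ • u + y) e) := by simp [y]
    _ = ⟪u, x⟫ * ω (Fin.cons u e) + ω (Fin.cons y e) := by
      rw [MultilinearMap.cons_add, MultilinearMap.cons_smul]; rfl
    _ = ⟪u, x⟫ * ω (Fin.cons u e) := by rw [hy0, add_zero]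

theorem eq_zero_of_forall_inner_sub_eq_zero {ι : Type*} {p : ι → E}
    (hp : vectorSpan ℝ (range p) = ⊤) {y : E}
    (hy : ∀ s t, ⟪y, p s - p t⟫ = 0) : y = 0 := by
  have : vectorSpan ℝ (range p) ≤ (ℝ ∙ y)ᗮ := by
    rw [vectorSpan_def, Submodule.span_le]
    rintro _ ⟨_, ⟨s, rfl⟩, _, ⟨t, rfl⟩, rfl⟩
    exact Submodule.mem_orthogonal_singleton_iff_inner_right.2 (hy s t)
  rw [hp, top_le_iff] at this
  exact inner_self_eq_zero.1 (Submodule.mem_orthogonal_singleton_iff_inner_right.1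
    (this ▸ Submodule.mem_top))

noncomputable def unitSimplexVertex (m : ℕ) : Fin (m + 1) → EuclideanSpace ℝ (Fin m) :=
  Fin.cons 0 (EuclideanSpace.basisFun (Fin m) ℝ)

theorem hausdorffMeasure_convexHull_unitSimplexVertex_pos (m : ℕ) :
    0 < μH[m] (convexHull ℝ (range (unitSimplexVertex m))) := by
  refine Measure.measure_pos_of_nonempty_interior _ ?_
  rw [interior_convexHull_nonempty_iff_affineSpan_eq_top,
    AffineSubspace.affineSpan_eq_top_iff_vectorSpan_eq_top_of_nonempty ℝ _ _ (range_nonempty _),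
    eq_top_iff,
    ← (EuclideanSpace.basisFun (Fin m) ℝ).toBasis.span_eq, Submodule.span_le]
  rintro _ ⟨j, rfl⟩
  simpa [unitSimplexVertex] using
    vsub_mem_vectorSpan ℝ (mem_range_self (f := unitSimplexVertex m) j.succ) (mem_range_self 0)

theorem hausdorffMeasure_convexHull_unitSimplexVertex_lt_top (m : ℕ) :
    μH[m] (convexHull ℝ (range (unitSimplexVertex m))) < ⊤ :=
  ((finite_range _).isCompact_convexHull ℝ).measure_lt_top

theorem hausdorffMeasure_convexHull_eq [MeasurableSpace E] [BorelSpace E] {m : ℕ}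
    {w : Fin (m + 1) → E} (hw : LinearIndependent ℝ (edgeVectors w)) :
    μH[m] (convexHull ℝ (range w)) = ENNReal.ofReal √(gram ℝ (edgeVectors w)).det *
      μH[m] (convexHull ℝ (range (unitSimplexVertex m))) := by
  set S := Submodule.span ℝ (range (edgeVectors w))
  have hS : Module.finrank ℝ S = m := (finrank_span_eq_card hw).trans (Fintype.card_fin m)
  have : FiniteDimensional ℝ S := FiniteDimensional.span_of_finite ℝ (finite_range _)
  let ob : OrthonormalBasis (Fin m) ℝ S := (stdOrthonormalBasis ℝ S).reindex (finCongr hS)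
  let L : EuclideanSpace ℝ (Fin m) →ₗᵢ[ℝ] E := S.subtypeₗᵢ.comp ob.repr.symm.toLinearIsometry
  let u (j : Fin m) : EuclideanSpace ℝ (Fin m) :=
    ob.repr ⟨edgeVectors w j, Submodule.subset_span (mem_range_self j)⟩
  let M := (EuclideanSpace.basisFun (Fin m) ℝ).toBasis.constr ℝ u
  let Φ := (L.toLinearMap ∘ₗ M).toAffineMap + AffineMap.const ℝ _ (w 0)
  have hΦ : Φ ∘ unitSimplexVertex m = w := by
    funext j
    induction j using Fin.cases with
    | zero => simp [Φ, unitSimplexVertex]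
    | succ j => simp [Φ, unitSimplexVertex, M, u, L, edgeVectors]
  have hgram : gram ℝ u = gram ℝ (edgeVectors w) := by
    ext i j
    simp [gram_apply, u]
  have hdet : |LinearMap.det M| = √(gram ℝ (edgeVectors w)).det := by
    rw [EuclideanSpace.abs_det_basisFun_constr, hgram]
  have hT : Isometry fun x => w 0 + L x := (IsometryEquiv.addLeft (w 0)).isometry.comp L.isometry
  calc μH[m] (convexHull ℝ (range w))
      = μH[m] ((fun x => w 0 + L x) '' (M '' convexHull ℝ (range (unitSimplexVertex m)))) := by
        have hΦ' : ⇑Φ = fun x => w 0 + L (M x) := by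
          funext x
          simp [Φ, add_comm]
        rw [image_image, ← hΦ', AffineMap.image_convexHull, ← range_comp, hΦ]
    _ = _ := by
        rw [hT.hausdorffMeasure_image (.inl m.cast_nonneg), Measure.addHaar_image_linearMap, hdet]

end

section

variable {n : ℕ} {v f : Fin (n + 1) → EuclideanSpace ℝ (Fin n)}

theorem inner_sum_smul_outwardNormal_sub (hf : ∀ i, IsOutwardNormal v i (f i))
    (c : Fin (n + 1) → ℝ) {s t : Fin (n + 1)} (hst : s ≠ t) :
    ⟪∑ i, c i • f i, v s - v t⟫ = c s * ⟪f s, v s - v t⟫ + c t * ⟪f t, v s - v t⟫ := by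
  simp only [sum_inner, real_inner_smul_left]
  refine Fintype.sum_eq_add s t hst fun i ⟨his, hit⟩ => ?_
  rw [(hf i).2.1 s t (Ne.symm his) (Ne.symm hit), mul_zero]

theorem eq_zero_of_sum_smul_outwardNormal_eq_zero (hf : ∀ i, IsOutwardNormal v i (f i))
    {c : Fin (n + 1) → ℝ} (hc : ∑ i, c i • f i = 0) {t : Fin (n + 1)} (ht : c t = 0) :
    c = 0 := by
  funext s
  rcases eq_or_ne s t with rfl | hst
  · exact ht
  have h := inner_sum_smul_outwardNormal_sub hf c hst
  rw [hc, inner_zero_left, ht, zero_mul, add_zero, eq_comm, mul_eq_zero] at h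
  exact h.resolve_right ((hf s).2.2 t hst.symm).ne

-- `(vertexMatrix v).det` is `n!` times the signed volume of the simplex.
def vertexMatrix (v : Fin (n + 1) → EuclideanSpace ℝ (Fin n)) :
    Matrix (Fin (n + 1)) (Fin (n + 1)) ℝ :=
  of fun j => vecCons 1 (v j).ofLp

end

section

variable {m : ℕ} {v f : Fin (m + 1 + 1) → EuclideanSpace ℝ (Fin (m + 1))}

theorem linearIndependent_edgeVectors_facet (hv : AffineIndependent ℝ v) (i : Fin (m + 1 + 1)) :
    LinearIndependent ℝ (edgeVectors (v ∘ i.succAbove)) :=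
  (hv.comp_embedding i.succAboveEmb).linearIndependent_edgeVectors

theorem orthogonal_le_span_edgeVectors_facet (hv : AffineIndependent ℝ v)
    (hf : ∀ i, IsOutwardNormal v i (f i)) (i : Fin (m + 1 + 1)) :
    (ℝ ∙ f i)ᗮ ≤ Submodule.span ℝ (range (edgeVectors (v ∘ i.succAbove))) := by
  have : Fact (Module.finrank ℝ (EuclideanSpace ℝ (Fin (m + 1))) = m + 1) :=
    ⟨finrank_euclideanSpace_fin⟩
  refine (Submodule.eq_of_le_of_finrank_eq ?_ ?_).ge
  · rw [Submodule.span_le]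
    rintro _ ⟨j, rfl⟩
    exact Submodule.mem_orthogonal_singleton_iff_inner_right.2
      ((hf i).2.1 _ _ (i.succAbove_ne _) (i.succAbove_ne _))
  · rw [finrank_span_eq_card (linearIndependent_edgeVectors_facet hv i), Fintype.card_fin,
      Submodule.finrank_orthogonal_span_singleton (n := m)
        (norm_ne_zero_iff.1 ((hf i).1 ▸ one_ne_zero))]

-- Up to sign, the volume of the parallelepiped spanned by the edges of facet `i`.
variable (v f) in
noncomputable def facetDet (i : Fin (m + 1 + 1)) : ℝ :=
  (EuclideanSpace.basisFun (Fin (m + 1)) ℝ).toBasis.det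
    (Fin.cons (f i) (edgeVectors (v ∘ i.succAbove)))

theorem abs_det_cons_edgeVectors_facet (v : Fin (m + 1 + 1) → EuclideanSpace ℝ (Fin (m + 1)))
    (i : Fin (m + 1 + 1)) (x : EuclideanSpace ℝ (Fin (m + 1))) :
    |(EuclideanSpace.basisFun (Fin (m + 1)) ℝ).toBasis.det
        (Fin.cons x (edgeVectors (v ∘ i.succAbove)))| =
      |((vertexMatrix v).updateRow i (vecCons 0 x.ofLp)).det| := by
  have hrows : (fun j => vertexMatrix v (i.succAbove j)) =
      fun j => vecCons 1 (v (i.succAbove j)).ofLp := rfl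
  rw [det_updateRow_eq_neg_one_pow_mul_det_vecCons, abs_mul, abs_pow, abs_neg, abs_one, one_pow,
    one_mul, hrows, det_vecCons_zero_vecCons_one, abs_neg, EuclideanSpace.basisFun_toBasis_det]
  congr 2
  ext a b
  induction a using Fin.cases <;> simp [edgeVectors]

theorem abs_inner_sub_mul_facetDet (hv : AffineIndependent ℝ v)
    (hf : ∀ i, IsOutwardNormal v i (f i)) {i j : Fin (m + 1 + 1)} (hij : i ≠ j) :
    |⟪f i, v i - v j⟫ * facetDet v f i| = |(vertexMatrix v).det| := by
  rw [facetDet, ← AlternatingMap.apply_cons_eq_inner_mul _ (hf i).1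
    (orthogonal_le_span_edgeVectors_facet hv hf i), abs_det_cons_edgeVectors_facet]
  have hrow : vecCons 0 (v i - v j).ofLp = vertexMatrix v i + (-1 : ℝ) • vertexMatrix v j := by
    ext k
    induction k using Fin.cases <;> simp [vertexMatrix, sub_eq_add_neg]
  rw [hrow, det_updateRow_add_smul_self _ hij]

theorem sum_abs_facetDet_smul_eq_zero (hv : AffineIndependent ℝ v)
    (hf : ∀ i, IsOutwardNormal v i (f i)) : ∑ i, |facetDet v f i| • f i = 0 := by
  have hneg {i j} (hij : i ≠ j) :
      |facetDet v f i| * ⟪f i, v i - v j⟫ = -|(vertexMatrix v).det| := by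
    rw [← abs_inner_sub_mul_facetDet hv hf hij, abs_mul, abs_of_neg ((hf i).2.2 j hij.symm)]
    ring
  refine eq_zero_of_forall_inner_sub_eq_zero
    (hv.vectorSpan_eq_top_of_card_eq_finrank_add_one (by simp)) fun s t => ?_
  rcases eq_or_ne s t with rfl | hst
  · simp
  rw [inner_sum_smul_outwardNormal_sub hf _ hst, hneg hst, ← neg_sub (v t), inner_neg_right,
    mul_neg, hneg hst.symm]
  ring

theorem facetDet_sq (hf : ∀ i, IsOutwardNormal v i (f i)) (i : Fin (m + 1 + 1)) :
    facetDet v f i ^ 2 = (gram ℝ (edgeVectors (v ∘ i.succAbove))).det := by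
  rw [facetDet, OrthonormalBasis.toBasis_det_sq, det_gram_cons, (hf i).1, one_pow, one_mul]
  exact fun j => (hf i).2.1 _ _ (i.succAbove_ne _) (i.succAbove_ne _)

theorem facetDet_ne_zero (hv : AffineIndependent ℝ v) (hf : ∀ i, IsOutwardNormal v i (f i))
    (i : Fin (m + 1 + 1)) : facetDet v f i ≠ 0 := fun h =>
  det_gram_ne_zero_iff_linearIndependent.2 (linearIndependent_edgeVectors_facet hv i) <| by
    rw [← facetDet_sq hf, h, zero_pow two_ne_zero]

theorem faceArea_eq_mul_abs_facetDet (hv : AffineIndependent ℝ v)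
    (hf : ∀ i, IsOutwardNormal v i (f i)) (i : Fin (m + 1 + 1)) :
    faceArea v i =
      (μH[m] (convexHull ℝ (range (unitSimplexVertex m)))).toReal * |facetDet v f i| := by
  rw [faceArea, Nat.cast_succ, add_sub_cancel_right, ← Fin.range_succAbove, ← range_comp,
    hausdorffMeasure_convexHull_eq (linearIndependent_edgeVectors_facet hv i),
    ENNReal.toReal_mul, ENNReal.toReal_ofReal (Real.sqrt_nonneg _), ← facetDet_sq hf,
    Real.sqrt_sq_eq_abs, mul_comm]

end

/-- For a non-degenerate simplex, the adjugate of the Gram matrix of outward unit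
normals is a positive multiple of the outer product `a aᵀ` of the area vector with
itself; in particular `A_i²/A_j² = adj(G)_{ii}/adj(G)_{jj}`. -/
theorem adjugate_gram_eq_pos_smul_outer_area {n : ℕ}
    (v : Fin (n + 1) → EuclideanSpace ℝ (Fin n)) (hv : AffineIndependent ℝ v)
    (f : Fin (n + 1) → EuclideanSpace ℝ (Fin n))
    (hf : ∀ i, IsOutwardNormal v i (f i))
    (G : Matrix (Fin (n + 1)) (Fin (n + 1)) ℝ) (hG : ∀ i j, G i j = ⟪f i, f j⟫) :
    (∃ c : ℝ, 0 < c ∧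
        G.adjugate = c • Matrix.vecMulVec (fun i => faceArea v i) (fun i => faceArea v i)) ∧
      ∀ i j, faceArea v i ^ 2 / faceArea v j ^ 2 = G.adjugate i i / G.adjugate j j := by
  obtain _ | m := n
  · exact absurd (hf 0).1 (by simp [Subsingleton.elim (f 0) 0])
  have hGf : G = gram ℝ f := Matrix.ext hG
  set C := (μH[m] (convexHull ℝ (range (unitSimplexVertex m)))).toReal
  have hC : 0 < C := ENNReal.toReal_pos (hausdorffMeasure_convexHull_unitSimplexVertex_pos m).ne'
    (hausdorffMeasure_convexHull_unitSimplexVertex_lt_top m).ne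
  have harea := faceArea_eq_mul_abs_facetDet hv hf
  have hpos i : 0 < faceArea v i := harea i ▸ mul_pos hC (abs_pos.2 (facetDet_ne_zero hv hf i))
  have hsum : ∑ i, faceArea v i • f i = 0 := by
    simp_rw [harea, mul_smul, ← Finset.smul_sum, sum_abs_facetDet_smul_eq_zero hv hf, smul_zero]
  obtain ⟨c, hc, hadj⟩ := exists_pos_adjugate_gram_eq_smul_vecMulVec f hsum (hpos 0).ne'
    fun c hc h0 => eq_zero_of_sum_smul_outwardNormal_eq_zero hf hc h0
  rw [hGf, hadj]
  refine ⟨⟨c, hc, rfl⟩, fun i j => ?_⟩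
  simp [vecMulVec_apply, mul_div_mul_left _ _ hc.ne', sq]
end

section
/- Let M be a symmetric n×n real positive semidefinite matrix of rank n−1 with null space spanned by a vector v. Then adj(M) = c·vvᵀ where c = (product of nonzero eigenvalues of M)/‖v‖² > 0; in particular all diagonal entries adj(M)_{ii} are nonnegative, and adj(M)_{ii} > 0 whenever v_i ≠ 0. -/
/-! Diagonalise `M = U D Uᵀ` with `U` orthogonal. Conjugation by `U` commutes with the
adjugate, and since the rank condition leaves exactly one eigenvalue `μ i₀ = 0`, the adjugate
of `D` has the single nonzero entry `p = ∏_{j ≠ i₀} μ j > 0`, at `(i₀, i₀)`. Hence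
`adj M = p • w wᵀ` for the unit eigenvector `w` of `μ i₀`; it spans the kernel, so `w = a • v`
with `a² ‖v‖² = 1`. Finally `charpoly M = X * ∏_{j ≠ i₀} (X - μ j)` has linear coefficient
`(-1)^(n-1) p`. -/

open Matrix

open Polynomial Finset

lemma Polynomial.coeff_one_prod_X_sub_C_of_eq_zero {ι R : Type*} [DecidableEq ι] [CommRing R]
    {s : Finset ι} {μ : ι → R} {i₀ : ι} (hi₀ : i₀ ∈ s) (h : μ i₀ = 0) :
    (∏ i ∈ s, (X - C (μ i))).coeff 1 = (-1) ^ (#s - 1) * ∏ i ∈ s.erase i₀, μ i := by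
  rw [← mul_prod_erase _ _ hi₀, h, C_0, sub_zero, coeff_X_mul, coeff_zero_eq_eval_zero,
    eval_prod, ← card_erase_of_mem hi₀, ← prod_neg]
  simp

namespace Matrix

section Adjugate

variable {ι R : Type*} [Fintype ι] [DecidableEq ι] [CommRing R]

lemma adjugate_eq_det_smul_of_mul_eq_one {U V : Matrix ι ι R} (h : U * V = 1) :
    adjugate U = U.det • V :=
  calc adjugate U = adjugate U * (U * V) := by rw [h, Matrix.mul_one]
    _ = U.det • V := by rw [← Matrix.mul_assoc, adjugate_mul, smul_mul, Matrix.one_mul]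

lemma adjugate_mul_mul_of_mul_eq_one {U V : Matrix ι ι R} (hUV : U * V = 1)
    (hVU : V * U = 1) (A : Matrix ι ι R) : adjugate (U * A * V) = U * adjugate A * V := by
  have hdet : U.det * V.det = 1 := by rw [← det_mul, hUV, det_one]
  rw [adjugate_mul_distrib, adjugate_mul_distrib, adjugate_eq_det_smul_of_mul_eq_one hUV,
    adjugate_eq_det_smul_of_mul_eq_one hVU]
  simp only [Matrix.smul_mul, Matrix.mul_smul, smul_smul, hdet, one_smul, Matrix.mul_assoc]

lemma adjugate_diagonal_of_eq_zero {d : ι → R} {i₀ : ι} (h : d i₀ = 0) :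
    adjugate (diagonal d) = single i₀ i₀ (∏ j ∈ univ.erase i₀, d j) := by
  rw [adjugate_diagonal, ← diagonal_single]
  congr 1
  ext i
  rcases eq_or_ne i i₀ with rfl | hi
  · simp
  · rw [Pi.single_eq_of_ne hi]
    exact prod_eq_zero (mem_erase.2 ⟨hi.symm, mem_univ _⟩) h

lemma mul_single_mul (U V : Matrix ι ι R) (i : ι) (r : R) :
    U * single i i r * V = r • vecMulVec (fun k ↦ U k i) (V i) := by
  ext k l
  simp only [single, ite_and, mul_apply, of_apply, mul_ite, mul_zero, sum_ite_eq, mem_univ,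
    ↓reduceIte, ite_mul, zero_mul, smul_apply, vecMulVec_apply, smul_eq_mul]
  ring

end Adjugate

namespace IsHermitian

variable {ι : Type*} [Fintype ι] [DecidableEq ι]

lemma existsUnique_eigenvalues_eq_zero {𝕜 : Type*} [RCLike 𝕜] {A : Matrix ι ι 𝕜}
    (hA : A.IsHermitian) [Nonempty ι] (hrank : A.rank = Fintype.card ι - 1) :
    ∃! i, hA.eigenvalues i = 0 := by
  rw [Fintype.existsUnique_iff_card_one, ← Fintype.card_subtype]
  have hcompl := Fintype.card_subtype_compl (fun i ↦ hA.eigenvalues i = 0)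
  rw [← hA.rank_eq_card_non_zero_eigs] at hcompl
  have hle := Fintype.card_subtype_le (fun i ↦ hA.eigenvalues i = 0)
  have hpos := Fintype.card_pos (α := ι)
  omega

variable {A : Matrix ι ι ℝ} (hA : A.IsHermitian) {i₀ : ι}

lemma charpoly_coeff_one_of_eigenvalues_eq_zero (h : hA.eigenvalues i₀ = 0) :
    A.charpoly.coeff 1 =
      (-1) ^ (Fintype.card ι - 1) * ∏ j ∈ univ.erase i₀, hA.eigenvalues j := by
  rw [hA.charpoly_eq, RCLike.ofReal_real_eq_id]
  exact coeff_one_prod_X_sub_C_of_eq_zero (mem_univ i₀) h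

lemma adjugate_eq_of_eigenvalues_eq_zero (h : hA.eigenvalues i₀ = 0) :
    A.adjugate = (∏ j ∈ univ.erase i₀, hA.eigenvalues j) •
      vecMulVec ⇑(hA.eigenvectorBasis i₀) ⇑(hA.eigenvectorBasis i₀) := by
  set U := hA.eigenvectorUnitary
  have hspec : A = U * diagonal hA.eigenvalues * star U := by
    simpa [RCLike.ofReal_real_eq_id] using hA.spectral_theorem
  conv_lhs => rw [hspec]
  rw [adjugate_mul_mul_of_mul_eq_one (Unitary.coe_mul_star_self U)
    (Unitary.coe_star_mul_self U), adjugate_diagonal_of_eq_zero h, mul_single_mul]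
  rfl

lemma exists_eigenvectorBasis_eq_smul {v : ι → ℝ}
    (hv : LinearMap.ker A.mulVecLin = Submodule.span ℝ {v}) (h : hA.eigenvalues i₀ = 0) :
    ∃ a : ℝ, ⇑(hA.eigenvectorBasis i₀) = a • v ∧ a ^ 2 * ∑ i, v i ^ 2 = 1 := by
  have hker : ⇑(hA.eigenvectorBasis i₀) ∈ LinearMap.ker A.mulVecLin := by
    rw [LinearMap.mem_ker, mulVecLin_apply, hA.mulVec_eigenvectorBasis, h, zero_smul]
  rw [hv] at hker
  obtain ⟨a, ha⟩ := Submodule.mem_span_singleton.1 hker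
  refine ⟨a, ha.symm, ?_⟩
  have hnorm := EuclideanSpace.real_norm_sq_eq (hA.eigenvectorBasis i₀)
  rw [hA.eigenvectorBasis.orthonormal.1 i₀] at hnorm
  have hcoord : ∀ i, hA.eigenvectorBasis i₀ i = a * v i := fun i ↦ by rw [← ha]; rfl
  simpa [hcoord, mul_pow, mul_sum] using hnorm.symm

end IsHermitian

lemma PosSemidef.prod_erase_eigenvalues_pos {ι : Type*} [Fintype ι] [DecidableEq ι]
    {A : Matrix ι ι ℝ} (hA : A.PosSemidef) {i₀ : ι}
    (h : ∀ i, hA.1.eigenvalues i = 0 → i = i₀) :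
    0 < ∏ j ∈ univ.erase i₀, hA.1.eigenvalues j :=
  prod_pos fun j hj ↦ (hA.eigenvalues_nonneg j).lt_of_ne fun h0 ↦ ne_of_mem_erase hj (h j h0.symm)

end Matrix

theorem adjugate_of_posSemidef_rank_pred_general {n : ℕ} (hn : 0 < n)
    (M : Matrix (Fin n) (Fin n) ℝ) (hpsd : M.PosSemidef)
    (hrank : M.rank = n - 1) (v : Fin n → ℝ)
    (hv : LinearMap.ker M.mulVecLin = Submodule.span ℝ {v}) :
    ∃ c : ℝ,
      c = ((-1 : ℝ) ^ (n - 1) * M.charpoly.coeff 1) / ∑ i, v i ^ 2 ∧ 0 < c ∧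
      M.adjugate = c • Matrix.vecMulVec v v ∧
      (∀ i, 0 ≤ M.adjugate i i) ∧ ∀ i, v i ≠ 0 → 0 < M.adjugate i i := by
  have hH : M.IsHermitian := hpsd.1
  have : Nonempty (Fin n) := ⟨⟨0, hn⟩⟩
  obtain ⟨i₀, hi₀, huniq⟩ := hH.existsUnique_eigenvalues_eq_zero (by rwa [Fintype.card_fin])
  set p := ∏ j ∈ univ.erase i₀, hH.eigenvalues j
  have hp : 0 < p := hpsd.prod_erase_eigenvalues_pos huniq
  obtain ⟨a, hw, hnorm⟩ := hH.exists_eigenvectorBasis_eq_smul hv hi₀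
  have hadj : M.adjugate = (p * a ^ 2) • vecMulVec v v := by
    rw [hH.adjugate_eq_of_eigenvalues_eq_zero hi₀, hw, smul_vecMulVec, vecMulVec_smul,
      smul_smul, smul_smul, sq, mul_assoc]
  have hcoeff : (-1 : ℝ) ^ (n - 1) * M.charpoly.coeff 1 = p := by
    rw [hH.charpoly_coeff_one_of_eigenvalues_eq_zero hi₀, Fintype.card_fin, ← mul_assoc,
      ← mul_pow, neg_one_mul, neg_neg, one_pow, one_mul]
  have hc : 0 < p * a ^ 2 :=
    mul_pos hp ((sq_nonneg a).lt_of_ne' (left_ne_zero_of_mul_eq_one hnorm))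
  refine ⟨p * a ^ 2, ?_, hc, hadj, fun i ↦ ?_, fun i hi ↦ ?_⟩
  · rw [hcoeff, eq_div_iff (right_ne_zero_of_mul_eq_one hnorm), mul_assoc, hnorm, mul_one]
  · rw [hadj, Matrix.smul_apply, vecMulVec_apply, smul_eq_mul]
    exact mul_nonneg hc.le (mul_self_nonneg _)
  · rw [hadj, Matrix.smul_apply, vecMulVec_apply, smul_eq_mul]
    exact mul_pos hc (mul_self_pos.2 hi)

/-- For a symmetric positive semidefinite `n×n` real matrix of rank `n-1` with null
space spanned by `v`, the adjugate equals `c·vvᵀ` with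
`c = (product of nonzero eigenvalues)/‖v‖² > 0` (the product of the nonzero eigenvalues
being `(-1)^(n-1)` times the coefficient of `X` in the characteristic polynomial); in
particular all diagonal entries of the adjugate are nonnegative, and positive wherever
`v` is nonzero. -/
theorem adjugate_of_posSemidef_rank_pred {n : ℕ} (hn : 0 < n)
    (M : Matrix (Fin n) (Fin n) ℝ) (hsymm : Mᵀ = M) (hpsd : M.PosSemidef)
    (hrank : M.rank = n - 1) (v : Fin n → ℝ)
    (hv : LinearMap.ker M.mulVecLin = Submodule.span ℝ {v}) :
    ∃ c : ℝ,
      c = ((-1 : ℝ) ^ (n - 1) * M.charpoly.coeff 1) / ∑ i, v i ^ 2 ∧ 0 < c ∧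
      M.adjugate = c • Matrix.vecMulVec v v ∧
      (∀ i, 0 ≤ M.adjugate i i) ∧ ∀ i, v i ≠ 0 → 0 < M.adjugate i i :=
  adjugate_of_posSemidef_rank_pred_general hn M hpsd hrank v hv
end
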